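/- Let f ∈ k[x,y,z] be homogeneous of degree d, char k = 0, δ = det(Hessian f), and Hamiltonians H_yz, H_zx as usual. Then (d-1)·(H_zx(Δ_xx) − H_yz(Δ_xy)) = x·∂_z δ, where Δ_xx = f_yy f_zz − f_yz² and Δ_xy = f_xz f_yz − f_xy f_zz. -/

import Mathlib

/-!
Differentiating Euler's identity `Σᵢ xᵢ ∂ᵢf = d f` gives `Σᵢ xᵢ f_{ij} = (d - 1) f_j`, and
differentiating once more in `z` gives `Σᵢ xᵢ f_{ijz} = (d - 2) f_{jz}`. The difference of the two
sides of the identity is a combination of these six relations whose coefficients are the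
first-row cofactors of the Hessian and their `z`-derivatives.
-/

open MvPolynomial

noncomputable def dX {k : Type*} [CommSemiring k] (f : MvPolynomial (Fin 3) k) :
    MvPolynomial (Fin 3) k := pderiv 0 f
noncomputable def dY {k : Type*} [CommSemiring k] (f : MvPolynomial (Fin 3) k) :
    MvPolynomial (Fin 3) k := pderiv 1 f
noncomputable def dZ {k : Type*} [CommSemiring k] (f : MvPolynomial (Fin 3) k) :
    MvPolynomial (Fin 3) k := pderiv 2 f

namespace MvPolynomial

variable {R σ : Type*}

theorem pderiv_pderiv_comm [CommRing R] (i j : σ) (φ : MvPolynomial σ R) :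
    pderiv i (pderiv j φ) = pderiv j (pderiv i φ) := by
  classical
  have h : ⁅pderiv i, pderiv j⁆ = (0 : Derivation R (MvPolynomial σ R) (MvPolynomial σ R)) :=
    derivation_ext fun n => by
      rw [Derivation.commutator_apply]
      simp [pderiv_X, Pi.single_apply, apply_ite]
  have hφ := congr($h φ)
  rwa [Derivation.commutator_apply, Derivation.zero_apply, sub_eq_zero] at hφ

theorem sum_X_mul_pderiv_pderiv [CommRing R] [Fintype σ] {φ : MvPolynomial σ R} {c : R}
    (h : ∑ i, X i * pderiv i φ = C c * φ) (j : σ) :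
    ∑ i, X i * pderiv i (pderiv j φ) = C (c - 1) * pderiv j φ := by
  classical
  have h' := congr(pderiv j $h)
  simp only [map_sum, Derivation.leibniz, pderiv_C, smul_eq_mul, pderiv_X, Pi.single_apply,
    mul_ite, mul_one, mul_zero, add_zero, Finset.sum_add_distrib, Finset.sum_ite_eq',
    Finset.mem_univ, if_true] at h'
  simp only [pderiv_pderiv_comm j] at h'
  rw [map_sub, map_one, sub_mul, one_mul, ← h']
  ring

noncomputable def hessian [CommSemiring R] (φ : MvPolynomial σ R) :
    Matrix σ σ (MvPolynomial σ R) :=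
  Matrix.of fun i j => pderiv i (pderiv j φ)

end MvPolynomial

section Hessian

variable {k : Type*} [CommRing k]

noncomputable def hamYZ (f g : MvPolynomial (Fin 3) k) : MvPolynomial (Fin 3) k :=
  dZ f * dY g - dY f * dZ g

noncomputable def hamZX (f g : MvPolynomial (Fin 3) k) : MvPolynomial (Fin 3) k :=
  dX f * dZ g - dZ f * dX g

noncomputable def cofXX (f : MvPolynomial (Fin 3) k) : MvPolynomial (Fin 3) k :=
  dY (dY f) * dZ (dZ f) - dZ (dY f) ^ 2

noncomputable def cofXY (f : MvPolynomial (Fin 3) k) : MvPolynomial (Fin 3) k :=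
  dZ (dX f) * dZ (dY f) - dY (dX f) * dZ (dZ f)

theorem hamZX_cofXX_sub_hamYZ_cofXY {f : MvPolynomial (Fin 3) k} {c : k}
    (hf : ∑ i, X i * pderiv i f = C c * f) :
    C (c - 1) * (hamZX f (cofXX f) - hamYZ f (cofXY f)) = X 0 * pderiv 2 (hessian f).det := by
  have e := sum_X_mul_pderiv_pderiv hf
  have s := sum_X_mul_pderiv_pderiv (e 2)
  have e0 := e 0; have e1 := e 1; have e2 := e 2
  have s0 := s 0; have s1 := s 1; have s2 := s 2
  simp only [hamZX, hamYZ, cofXX, cofXY, hessian, dX, dY, dZ, Matrix.det_fin_three, Matrix.of_apply,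
    Fin.sum_univ_three, map_add, map_sub, map_one, pderiv_mul, pderiv_pow,
    pderiv_pderiv_comm (1 : Fin 3) 0, pderiv_pderiv_comm (2 : Fin 3) 0,
    pderiv_pderiv_comm (2 : Fin 3) 1] at e0 e1 e2 s0 s1 s2 ⊢
  set h01 := pderiv 0 (pderiv 1 f)
  set h02 := pderiv 0 (pderiv 2 f)
  set h11 := pderiv 1 (pderiv 1 f)
  set h12 := pderiv 1 (pderiv 2 f)
  set h22 := pderiv 2 (pderiv 2 f)
  set t012 := pderiv 0 (pderiv 1 (pderiv 2 f))
  set t022 := pderiv 0 (pderiv 2 (pderiv 2 f))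
  set t112 := pderiv 1 (pderiv 1 (pderiv 2 f))
  set t122 := pderiv 1 (pderiv 2 (pderiv 2 f))
  set t222 := pderiv 2 (pderiv 2 (pderiv 2 f))
  linear_combination
    (-(t112 * h22 + h11 * t222 - 2 * h12 * t122)) * e0
    + (-(t022 * h12 + h02 * t122 - t012 * h22 - h01 * t222)) * e1
    + (-(-h11 * t022 + h12 * t012 - h02 * t112 + h01 * t122)) * e2
    + (h12 ^ 2 - h11 * h22) * s0
    + (h01 * h22 - h02 * h12) * s1
    + (h02 * h11 - h01 * h12) * s2

end Hessian

theorem stmt16_general {k : Type*} [Field k] (d : ℕ)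
    (f : MvPolynomial (Fin 3) k) (hf : f.IsHomogeneous d) :
    C ((d : k) - 1) *
        ((dX f * dZ (dY (dY f) * dZ (dZ f) - dZ (dY f) ^ 2)
            - dZ f * dX (dY (dY f) * dZ (dZ f) - dZ (dY f) ^ 2))
          - (dZ f * dY (dZ (dX f) * dZ (dY f) - dY (dX f) * dZ (dZ f))
            - dY f * dZ (dZ (dX f) * dZ (dY f) - dY (dX f) * dZ (dZ f))))
      = X 0 * pderiv 2
          (Matrix.det (Matrix.of fun i j : Fin 3 => pderiv i (pderiv j f))) :=
  hamZX_cofXX_sub_hamYZ_cofXY (by rw [hf.sum_X_mul_pderiv, nsmul_eq_mul, map_natCast])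

theorem stmt16 {k : Type*} [Field k] [CharZero k] (d : ℕ)
    (f : MvPolynomial (Fin 3) k) (hf : f.IsHomogeneous d) :
    C ((d : k) - 1) *
        ((dX f * dZ (dY (dY f) * dZ (dZ f) - dZ (dY f) ^ 2)
            - dZ f * dX (dY (dY f) * dZ (dZ f) - dZ (dY f) ^ 2))
          - (dZ f * dY (dZ (dX f) * dZ (dY f) - dY (dX f) * dZ (dZ f))
            - dY f * dZ (dZ (dX f) * dZ (dY f) - dY (dX f) * dZ (dZ f))))
      = X 0 * pderiv 2
          (Matrix.det (Matrix.of fun i j : Fin 3 => pderiv i (pderiv j f))) :=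
  stmt16_general d f hf
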